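/- arXiv:2601.19642 — 2 statements merged into one kernel-verified Lean document; each statement's English description precedes it below -/
import Mathlib

section
/- Let X and Y be locally compact Hausdorff spaces and let T : C₀(X)⁺ → C₀(Y)⁺ be an injective map that is additive and positively homogeneous (T(f+g) = T(f)+T(g) and T(r·f) = r·T(f) for all f, g ∈ C₀(X)⁺ and r ≥ 0) and satisfies ‖T(f·g)‖ = ‖T(f)·T(g)‖ for all f, g ∈ C₀(X)⁺. Then ‖T(h)‖ ≤ ‖h‖ for every h ∈ C₀(X)⁺. -/
open scoped ZeroAtInfty
open Filter ZeroAtInftyContinuousMap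

lemma c0_apply_le_norm {Y : Type*} [TopologicalSpace Y] (f : C₀(Y, ℝ)) (y : Y) :
    ‖f y‖ ≤ ‖f‖ := by
  rw [← ZeroAtInftyContinuousMap.norm_toBCF_eq_norm]
  exact BoundedContinuousFunction.norm_coe_le_norm f.toBCF y

lemma c0_norm_le {Y : Type*} [TopologicalSpace Y] (f : C₀(Y, ℝ)) {C : ℝ} (hC : 0 ≤ C)
    (h : ∀ y, ‖f y‖ ≤ C) : ‖f‖ ≤ C := by
  rw [← ZeroAtInftyContinuousMap.norm_toBCF_eq_norm]
  exact (BoundedContinuousFunction.norm_le hC).2 h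

/-- An injective, additive, positively homogeneous, multiplicative-in-norm cone map is
norm-decreasing on the positive cone. -/
theorem norm_le_of_cone_map {X Y : Type*}
    [TopologicalSpace X] [LocallyCompactSpace X] [T2Space X]
    [TopologicalSpace Y] [LocallyCompactSpace Y] [T2Space Y]
    (T : C₀(X, ℝ) → C₀(Y, ℝ))
    (hmaps : Set.MapsTo T {f : C₀(X, ℝ) | ∀ x, 0 ≤ f x} {g : C₀(Y, ℝ) | ∀ y, 0 ≤ g y})
    (hinj : Set.InjOn T {f : C₀(X, ℝ) | ∀ x, 0 ≤ f x})
    (hadd : ∀ f g : C₀(X, ℝ), (∀ x, 0 ≤ f x) → (∀ x, 0 ≤ g x) → T (f + g) = T f + T g)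
    (hhom : ∀ f : C₀(X, ℝ), (∀ x, 0 ≤ f x) → ∀ r : ℝ, 0 ≤ r → T (r • f) = r • T f)
    (hmul : ∀ f g : C₀(X, ℝ), (∀ x, 0 ≤ f x) → (∀ x, 0 ≤ g x) →
      ‖T (f * g)‖ = ‖T f * T g‖) :
    ∀ h : C₀(X, ℝ), (∀ x, 0 ≤ h x) → ‖T h‖ ≤ ‖h‖ := by
  intro h hpos
  have hTh : ∀ y, 0 ≤ T h y := hmaps hpos
  -- the "remainder" g = ‖h‖ • h - h * h is nonnegative
  set g : C₀(X, ℝ) := ‖h‖ • h - h * h with hg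
  have hgpos : ∀ x, 0 ≤ g x := by
    intro x
    have h1 : h x ≤ ‖h‖ := le_trans (le_abs_self _) (c0_apply_le_norm h x)
    have : h x * h x ≤ ‖h‖ * h x := mul_le_mul_of_nonneg_right h1 (hpos x)
    simpa [hg, sub_nonneg] using this
  have hhpos : ∀ x, 0 ≤ (h * h) x := fun x => mul_nonneg (hpos x) (hpos x)
  have hsum : h * h + g = ‖h‖ • h := by
    simp [hg]
  -- key norm inequality: ‖T (h*h)‖ ≤ ‖h‖ * ‖T h‖
  have key : ‖T (h * h)‖ ≤ ‖h‖ * ‖T h‖ := by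
    have e1 : T (h * h) + T g = ‖h‖ • T h := by
      rw [← hadd _ _ hhpos hgpos, hsum, hhom h hpos ‖h‖ (norm_nonneg h)]
    have hTg : ∀ y, 0 ≤ T g y := hmaps hgpos
    have hThh : ∀ y, 0 ≤ T (h * h) y := hmaps hhpos
    have : ‖T (h * h)‖ ≤ ‖T (h * h) + T g‖ := by
      apply c0_norm_le _ (norm_nonneg _)
      intro y
      have : ‖(T (h * h) + T g) y‖ ≤ ‖T (h * h) + T g‖ := c0_apply_le_norm _ y
      have h2 : T (h * h) y ≤ (T (h * h) + T g) y := by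
        simp only [ZeroAtInftyContinuousMap.add_apply]
        linarith [hTg y]
      rw [Real.norm_eq_abs, abs_of_nonneg (hThh y)]
      calc T (h * h) y ≤ (T (h * h) + T g) y := h2
        _ ≤ ‖(T (h * h) + T g) y‖ := le_abs_self _
        _ ≤ ‖T (h * h) + T g‖ := c0_apply_le_norm _ y
    calc ‖T (h * h)‖ ≤ ‖T (h * h) + T g‖ := this
      _ = ‖‖h‖ • T h‖ := by rw [e1]
      _ = ‖h‖ * ‖T h‖ := by simpa using norm_smul ‖h‖ (T h)
  -- ‖T h‖ ^ 2 ≤ ‖T (h * h)‖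
  have sq_le : ‖T h‖ * ‖T h‖ ≤ ‖T (h * h)‖ := by
    rw [hmul h h hpos hpos]
    have hsqrt : ‖T h‖ ≤ Real.sqrt ‖T h * T h‖ := by
      apply c0_norm_le _ (Real.sqrt_nonneg _)
      intro y
      rw [Real.le_sqrt (norm_nonneg _) (norm_nonneg _)]
      have := c0_apply_le_norm (T h * T h) y
      simp only [ZeroAtInftyContinuousMap.mul_apply, Real.norm_eq_abs, abs_mul] at this ⊢
      nlinarith [abs_nonneg (T h y)]
    calc ‖T h‖ * ‖T h‖ ≤ Real.sqrt ‖T h * T h‖ * Real.sqrt ‖T h * T h‖ :=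
          mul_le_mul hsqrt hsqrt (norm_nonneg _) (Real.sqrt_nonneg _)
      _ = ‖T h * T h‖ := Real.mul_self_sqrt (norm_nonneg _)
  nlinarith [norm_nonneg (T h), norm_nonneg h]
end

section
/- Let X and Y be locally compact Hausdorff spaces and let T : C₀(X)⁺ → C₀(Y)⁺ be a bijection such that for all f, g ∈ C₀(X)⁺ one has ‖T(f+g)‖ = ‖T(f)+T(g)‖ and ‖T(f·g)‖ = ‖T(f)·T(g)‖. Then T is norm-preserving on the positive cone: ‖T(h)‖ = ‖h‖ for every h ∈ C₀(X)⁺. -/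
/-!
Write `N f = ‖T f‖` on the positive cone. Norm additivity makes `N` monotone with
`N (2 • f) = 2 N f`, so comparing with dyadic multiples gives `N (c • f) ≤ 2 c N f` for `c > 0`.
Norm multiplicativity and the C*-identity give `N (f * f) = N f ^ 2`; applying the dyadic bound to
`f ^ (2 ^ k)` and taking `2 ^ k`-th roots removes the factor `2`, so `N (c • f) ≤ c N f`. As
`f * f ≤ f` when `‖f‖ ≤ 1`, there `N f ≤ 1`, and scaling gives `N f ≤ ‖f‖`. Conversely, if
`N f < a < ‖f‖`, let `g = a⁻¹ • f` and `u = min g 1`: then `N u ≤ N g < 1`, while `h = g - u` is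
nonzero with `h * u = h`, so `N h ≤ N h * N u` forces `T h = 0 = T 0`, contradicting injectivity.
-/

open scoped ZeroAtInfty
open Filter ZeroAtInftyContinuousMap

theorem le_of_forall_pow_two_pow_le_mul {a b C : ℝ} (hb : 0 ≤ b)
    (h : ∀ k : ℕ, a ^ 2 ^ k ≤ C * b ^ 2 ^ k) : a ≤ b := by
  rcases hb.eq_or_lt with rfl | hb
  · simpa using h 0
  by_contra! hba
  have hq : 1 < a / b := (one_lt_div hb).mpr hba
  obtain ⟨k, hk⟩ := (((tendsto_pow_atTop_atTop_of_one_lt hq).comp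
    (tendsto_pow_atTop_atTop_of_one_lt one_lt_two)).eventually_gt_atTop C).exists
  rw [Function.comp_apply, div_pow, lt_div_iff₀ (by positivity)] at hk
  linarith [h k]

namespace ZeroAtInftyContinuousMap

variable {Z : Type*} [TopologicalSpace Z]

theorem apply_le_norm (f : C₀(Z, ℝ)) (x : Z) : f x ≤ ‖f‖ :=
  norm_toBCF_eq_norm (f := f) ▸ f.toBCF.apply_le_norm x

theorem norm_le_norm_of_nonneg_of_le {f g : C₀(Z, ℝ)} (hf : ∀ x, 0 ≤ f x)
    (hfg : ∀ x, f x ≤ g x) : ‖f‖ ≤ ‖g‖ := by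
  rw [← norm_toBCF_eq_norm, BoundedContinuousFunction.norm_le (norm_nonneg g)]
  exact fun x => (Real.norm_of_nonneg (hf x)).trans_le ((hfg x).trans (g.apply_le_norm x))

theorem exists_lt_apply_of_lt_norm {f : C₀(Z, ℝ)} (hf : ∀ x, 0 ≤ f x) {a : ℝ} (ha : 0 ≤ a)
    (hfa : a < ‖f‖) : ∃ x, a < f x := by
  by_contra! h
  refine hfa.not_ge ?_
  rw [← norm_toBCF_eq_norm, BoundedContinuousFunction.norm_le ha]
  exact fun x => (Real.norm_of_nonneg (hf x)).trans_le (h x)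

theorem norm_mul_self (f : C₀(Z, ℝ)) : ‖f * f‖ = ‖f‖ ^ 2 :=
  IsSelfAdjoint.norm_mul_self (ext fun _ => star_trivial _)

noncomputable def minOne (f : C₀(Z, ℝ)) : C₀(Z, ℝ) where
  toFun x := min (f x) 1
  continuous_toFun := f.continuous.min continuous_const
  zero_at_infty' := by
    have h : Continuous fun t : ℝ => min t 1 := by fun_prop
    simpa [Function.comp_def] using (h.tendsto 0).comp (zero_at_infty f)

@[simp]
theorem minOne_apply (f : C₀(Z, ℝ)) (x : Z) : f.minOne x = min (f x) 1 := rfl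

theorem sub_minOne_mul_minOne (f : C₀(Z, ℝ)) : (f - f.minOne) * f.minOne = f - f.minOne := by
  ext x
  simp only [mul_apply, sub_apply, minOne_apply]
  rcases le_total (f x) 1 with h | h <;> simp [h]

end ZeroAtInftyContinuousMap

section

variable {X Y : Type*} [TopologicalSpace X] [TopologicalSpace Y]

def IsNormAdditiveOnCone (T : C₀(X, ℝ) → C₀(Y, ℝ)) : Prop :=
  ∀ f g : C₀(X, ℝ), (∀ x, 0 ≤ f x) → (∀ x, 0 ≤ g x) → ‖T (f + g)‖ = ‖T f + T g‖

def IsNormMultiplicativeOnCone (T : C₀(X, ℝ) → C₀(Y, ℝ)) : Prop :=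
  ∀ f g : C₀(X, ℝ), (∀ x, 0 ≤ f x) → (∀ x, 0 ≤ g x) → ‖T (f * g)‖ = ‖T f * T g‖

variable {T : C₀(X, ℝ) → C₀(Y, ℝ)} {f : C₀(X, ℝ)}

theorem IsNormAdditiveOnCone.map_zero (hadd : IsNormAdditiveOnCone T) : T 0 = 0 := by
  have h := hadd 0 0 (fun _ => le_rfl) (fun _ => le_rfl)
  rw [add_zero, ← two_smul ℝ, norm_smul, Real.norm_two] at h
  exact norm_eq_zero.mp (by linarith)

theorem IsNormAdditiveOnCone.norm_map_two_smul (hadd : IsNormAdditiveOnCone T)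
    (hf : ∀ x, 0 ≤ f x) : ‖T ((2 : ℝ) • f)‖ = 2 * ‖T f‖ := by
  rw [two_smul ℝ f, hadd f f hf hf, ← two_smul ℝ, norm_smul, Real.norm_two]

theorem IsNormAdditiveOnCone.norm_map_zpow_two_smul (hadd : IsNormAdditiveOnCone T)
    (hf : ∀ x, 0 ≤ f x) (z : ℤ) : ‖T ((2 : ℝ) ^ z • f)‖ = 2 ^ z * ‖T f‖ := by
  have hpos : ∀ z : ℤ, ∀ x, 0 ≤ ((2 : ℝ) ^ z • f) x := fun z x => mul_nonneg (by positivity) (hf x)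
  have hsucc : ∀ z : ℤ, ‖T ((2 : ℝ) ^ (z + 1) • f)‖ = 2 * ‖T ((2 : ℝ) ^ z • f)‖ := fun z => by
    rw [zpow_add_one₀ two_ne_zero, mul_comm, mul_smul, hadd.norm_map_two_smul (hpos z)]
  induction z using Int.induction_on with
  | zero => simp
  | succ i ih => rw [hsucc, ih, zpow_add_one₀ two_ne_zero]; ring
  | pred i ih =>
    rw [← sub_add_cancel (-(i : ℤ)) 1, hsucc, zpow_add_one₀ two_ne_zero] at ih
    linarith

theorem norm_map_le_norm_map_of_le (hmaps : Set.MapsTo T {f | ∀ x, 0 ≤ f x} {g | ∀ y, 0 ≤ g y})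
    (hadd : IsNormAdditiveOnCone T) {g : C₀(X, ℝ)} (hf : ∀ x, 0 ≤ f x) (hfg : ∀ x, f x ≤ g x) :
    ‖T f‖ ≤ ‖T g‖ := by
  have hgf : ∀ x, 0 ≤ (g - f) x := fun x => sub_nonneg.mpr (hfg x)
  rw [← add_sub_cancel f g, hadd f (g - f) hf hgf]
  exact norm_le_norm_of_nonneg_of_le (hmaps hf) fun y => le_add_of_nonneg_right (hmaps hgf y)

theorem norm_map_smul_le_two_mul (hmaps : Set.MapsTo T {f | ∀ x, 0 ≤ f x} {g | ∀ y, 0 ≤ g y})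
    (hadd : IsNormAdditiveOnCone T) (hf : ∀ x, 0 ≤ f x) {c : ℝ} (hc : 0 < c) :
    ‖T (c • f)‖ ≤ 2 * (c * ‖T f‖) := by
  obtain ⟨z, hzc, hcz⟩ := exists_mem_Ioc_zpow hc one_lt_two
  have hle : ∀ x, (c • f) x ≤ ((2 : ℝ) ^ (z + 1) • f) x := fun x =>
    mul_le_mul_of_nonneg_right hcz (hf x)
  calc ‖T (c • f)‖ ≤ ‖T ((2 : ℝ) ^ (z + 1) • f)‖ :=
        norm_map_le_norm_map_of_le hmaps hadd (fun x => mul_nonneg hc.le (hf x)) hle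
    _ = 2 * (2 ^ z * ‖T f‖) := by
        rw [hadd.norm_map_zpow_two_smul hf, zpow_add_one₀ two_ne_zero]; ring
    _ ≤ 2 * (c * ‖T f‖) := by gcongr

theorem IsNormMultiplicativeOnCone.norm_map_mul_self (hmul : IsNormMultiplicativeOnCone T)
    (hf : ∀ x, 0 ≤ f x) : ‖T (f * f)‖ = ‖T f‖ ^ 2 := by
  rw [hmul f f hf hf, norm_mul_self]

theorem norm_map_smul_pow_two_pow_le (hmaps : Set.MapsTo T {f | ∀ x, 0 ≤ f x} {g | ∀ y, 0 ≤ g y})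
    (hadd : IsNormAdditiveOnCone T) (hmul : IsNormMultiplicativeOnCone T) (k : ℕ)
    (hf : ∀ x, 0 ≤ f x) {c : ℝ} (hc : 0 < c) :
    ‖T (c • f)‖ ^ 2 ^ k ≤ 2 * (c * ‖T f‖) ^ 2 ^ k := by
  induction k generalizing f c with
  | zero => simpa using norm_map_smul_le_two_mul hmaps hadd hf hc
  | succ k ih =>
    have hff : ∀ x, 0 ≤ (f * f) x := fun x => mul_nonneg (hf x) (hf x)
    have hcf : ∀ x, 0 ≤ (c • f) x := fun x => mul_nonneg hc.le (hf x)
    calc ‖T (c • f)‖ ^ 2 ^ (k + 1) = ‖T (c ^ 2 • (f * f))‖ ^ 2 ^ k := by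
          rw [pow_succ, pow_mul', ← hmul.norm_map_mul_self hcf, smul_mul_smul, sq]
      _ ≤ 2 * (c ^ 2 * ‖T (f * f)‖) ^ 2 ^ k := ih hff (by positivity)
      _ = 2 * (c * ‖T f‖) ^ 2 ^ (k + 1) := by
          rw [hmul.norm_map_mul_self hf, ← mul_pow, ← pow_mul, ← pow_succ']

theorem norm_map_smul_le (hmaps : Set.MapsTo T {f | ∀ x, 0 ≤ f x} {g | ∀ y, 0 ≤ g y})
    (hadd : IsNormAdditiveOnCone T) (hmul : IsNormMultiplicativeOnCone T)
    (hf : ∀ x, 0 ≤ f x) {c : ℝ} (hc : 0 < c) : ‖T (c • f)‖ ≤ c * ‖T f‖ :=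
  le_of_forall_pow_two_pow_le_mul (by positivity) fun k =>
    norm_map_smul_pow_two_pow_le hmaps hadd hmul k hf hc

theorem norm_map_le_one (hmaps : Set.MapsTo T {f | ∀ x, 0 ≤ f x} {g | ∀ y, 0 ≤ g y})
    (hadd : IsNormAdditiveOnCone T) (hmul : IsNormMultiplicativeOnCone T)
    (hf : ∀ x, 0 ≤ f x) (hf1 : ‖f‖ ≤ 1) : ‖T f‖ ≤ 1 := by
  have hff : ∀ x, (f * f) x ≤ f x := fun x =>
    mul_le_of_le_one_left (hf x) ((apply_le_norm f x).trans hf1)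
  have h := norm_map_le_norm_map_of_le hmaps hadd (fun x => mul_nonneg (hf x) (hf x)) hff
  rw [hmul.norm_map_mul_self hf] at h
  nlinarith [norm_nonneg (T f)]

theorem norm_map_le_norm (hmaps : Set.MapsTo T {f | ∀ x, 0 ≤ f x} {g | ∀ y, 0 ≤ g y})
    (hadd : IsNormAdditiveOnCone T) (hmul : IsNormMultiplicativeOnCone T)
    (hf : ∀ x, 0 ≤ f x) : ‖T f‖ ≤ ‖f‖ := by
  rcases eq_or_ne f 0 with rfl | hf0
  · simp [hadd.map_zero]
  have hnorm : 0 < ‖f‖ := norm_pos_iff.mpr hf0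
  have hg : ∀ x, 0 ≤ (‖f‖⁻¹ • f) x := fun x => mul_nonneg (by positivity) (hf x)
  have hg1 : ‖‖f‖⁻¹ • f‖ ≤ 1 := by
    rw [norm_smul, norm_inv, norm_norm, inv_mul_cancel₀ hnorm.ne']
  calc ‖T f‖ = ‖T (‖f‖ • ‖f‖⁻¹ • f)‖ := by rw [smul_inv_smul₀ hnorm.ne']
    _ ≤ ‖f‖ * ‖T (‖f‖⁻¹ • f)‖ := norm_map_smul_le hmaps hadd hmul hg hnorm
    _ ≤ ‖f‖ := mul_le_of_le_one_right hnorm.le (norm_map_le_one hmaps hadd hmul hg hg1)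

theorem IsNormMultiplicativeOnCone.map_eq_zero_of_mul_eq_self
    (hmul : IsNormMultiplicativeOnCone T) {u : C₀(X, ℝ)} (hf : ∀ x, 0 ≤ f x)
    (hu : ∀ x, 0 ≤ u x) (hfu : f * u = f) (hTu : ‖T u‖ < 1) : T f = 0 := by
  have h : ‖T f‖ ≤ ‖T f‖ * ‖T u‖ := by
    calc ‖T f‖ = ‖T f * T u‖ := by rw [← hmul f u hf hu, hfu]
      _ ≤ ‖T f‖ * ‖T u‖ := norm_mul_le _ _
  exact norm_eq_zero.mp (by nlinarith [norm_nonneg (T f), norm_nonneg (T u)])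

theorem norm_le_norm_map (hinj : Set.InjOn T {f | ∀ x, 0 ≤ f x})
    (hmaps : Set.MapsTo T {f | ∀ x, 0 ≤ f x} {g | ∀ y, 0 ≤ g y})
    (hadd : IsNormAdditiveOnCone T) (hmul : IsNormMultiplicativeOnCone T)
    (hf : ∀ x, 0 ≤ f x) : ‖f‖ ≤ ‖T f‖ := by
  by_contra! hlt
  obtain ⟨a, hTa, haf⟩ := exists_between hlt
  have ha : 0 < a := (norm_nonneg _).trans_lt hTa
  set g := a⁻¹ • f
  have hg : ∀ x, 0 ≤ g x := fun x => mul_nonneg (by positivity) (hf x)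
  have hu : ∀ x, 0 ≤ g.minOne x := fun x => le_min (hg x) zero_le_one
  have hh : ∀ x, 0 ≤ (g - g.minOne) x := fun x => sub_nonneg.mpr (min_le_left _ _)
  have hTu : ‖T g.minOne‖ < 1 := by
    calc ‖T g.minOne‖ ≤ ‖T g‖ := norm_map_le_norm_map_of_le hmaps hadd hu fun x => min_le_left _ _
      _ ≤ a⁻¹ * ‖T f‖ := norm_map_smul_le hmaps hadd hmul hf (inv_pos.mpr ha)
      _ < 1 := by rwa [inv_mul_lt_one₀ ha]
  have hh0 : g - g.minOne = 0 :=
    hinj hh (fun _ => le_rfl) <| by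
      rw [hmul.map_eq_zero_of_mul_eq_self hh hu (sub_minOne_mul_minOne g) hTu, hadd.map_zero]
  obtain ⟨x, hx⟩ := exists_lt_apply_of_lt_norm hf ha.le haf
  have hgx : 1 < g x := (one_lt_inv_mul₀ ha).mpr hx
  have hhx : g x - min (g x) 1 = 0 := DFunLike.congr_fun hh0 x
  rw [min_eq_right hgx.le] at hhx
  linarith

end

theorem norm_preserving_on_cone_general {X Y : Type*}
    [TopologicalSpace X]
    [TopologicalSpace Y]
    (T : C₀(X, ℝ) → C₀(Y, ℝ))
    (hbij : Set.BijOn T {f : C₀(X, ℝ) | ∀ x, 0 ≤ f x} {g : C₀(Y, ℝ) | ∀ y, 0 ≤ g y})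
    (hadd : ∀ f g : C₀(X, ℝ), (∀ x, 0 ≤ f x) → (∀ x, 0 ≤ g x) →
      ‖T (f + g)‖ = ‖T f + T g‖)
    (hmul : ∀ f g : C₀(X, ℝ), (∀ x, 0 ≤ f x) → (∀ x, 0 ≤ g x) →
      ‖T (f * g)‖ = ‖T f * T g‖) :
    ∀ h : C₀(X, ℝ), (∀ x, 0 ≤ h x) → ‖T h‖ = ‖h‖ := fun _ hh =>
  (norm_map_le_norm hbij.mapsTo hadd hmul hh).antisymm
    (norm_le_norm_map hbij.injOn hbij.mapsTo hadd hmul hh)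

/-- A ring isomorphism in norm between positive cones is norm-preserving on the cone. -/
theorem norm_preserving_on_cone {X Y : Type*}
    [TopologicalSpace X] [LocallyCompactSpace X] [T2Space X]
    [TopologicalSpace Y] [LocallyCompactSpace Y] [T2Space Y]
    (T : C₀(X, ℝ) → C₀(Y, ℝ))
    (hbij : Set.BijOn T {f : C₀(X, ℝ) | ∀ x, 0 ≤ f x} {g : C₀(Y, ℝ) | ∀ y, 0 ≤ g y})
    (hadd : ∀ f g : C₀(X, ℝ), (∀ x, 0 ≤ f x) → (∀ x, 0 ≤ g x) →
      ‖T (f + g)‖ = ‖T f + T g‖)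
    (hmul : ∀ f g : C₀(X, ℝ), (∀ x, 0 ≤ f x) → (∀ x, 0 ≤ g x) →
      ‖T (f * g)‖ = ‖T f * T g‖) :
    ∀ h : C₀(X, ℝ), (∀ x, 0 ≤ h x) → ‖T h‖ = ‖h‖ :=
  norm_preserving_on_cone_general T hbij hadd hmul
end
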